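/- Let (a_1,…,a_m) be a telescopic sequence. Then for every element a of the numerical semigroup S = a_1ℤ_{≥0} + ⋯ + a_mℤ_{≥0} there exists a unique tuple (k_1,…,k_m) ∈ B(A_m) such that a_1k_1 + ⋯ + a_mk_m = a. Equivalently, the map B(A_m) → ℤ_{≥0}, (k_1,…,k_m) ↦ Σ_{i=1}^m a_ik_i, is injective with image S. -/

import Mathlib

/-- `dseq a i = gcd(a_1, …, a_i)`. -/
def dseq (a : ℕ → ℕ) (i : ℕ) : ℕ := (Finset.Icc 1 i).gcd a

/-- The telescopic condition:
`a_i/d_i ∈ (a_1/d_{i-1})ℤ_{≥0} + ⋯ + (a_{i-1}/d_{i-1})ℤ_{≥0}` for `2 ≤ i ≤ m`. -/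
def Telescopic (m : ℕ) (a : ℕ → ℕ) : Prop :=
  ∀ i, 2 ≤ i → i ≤ m →
    ∃ k : ℕ → ℕ,
      a i / dseq a i = ∑ j ∈ Finset.Icc 1 (i - 1), (a j / dseq a (i - 1)) * k j

/-- Membership in `B(A_m)`: `0 ≤ l_i ≤ d_{i-1}/d_i - 1` for `2 ≤ i ≤ m`
(`l_1` is unrestricted). -/
def InB (m : ℕ) (a : ℕ → ℕ) (l : ℕ → ℕ) : Prop :=
  ∀ i, 2 ≤ i → i ≤ m → l i ≤ dseq a (i - 1) / dseq a i - 1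

/-!
Induction on `m`, writing `c = d_m / d_{m+1}`. Telescopy says exactly that `a_{m+1} c` is a
combination of `a_1, …, a_m`, so in any representation the coefficient of `a_{m+1}` can be
reduced modulo `c`, the excess `c ⌊x_{m+1}/c⌋` being pushed onto the first `m` generators.
Conversely, all of `a_1, …, a_m` are multiples of `d_m`, so two representations give
`a_{m+1} k ≡ a_{m+1} k' [MOD d_m]`; since `gcd(d_m, a_{m+1}) = d_{m+1}` this means
`k ≡ k' [MOD c]`, and coefficients in `[0, c)` must agree.
-/

open Finset

lemma dseq_succ (a : ℕ → ℕ) (m : ℕ) : dseq a (m + 1) = Nat.gcd (dseq a m) (a (m + 1)) := by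
  rw [dseq, ← insert_Icc_right_eq_Icc_add_one (by omega), gcd_insert, Nat.gcd_comm]
  rfl

lemma dseq_dvd {a : ℕ → ℕ} {m j : ℕ} (h1 : 1 ≤ j) (h2 : j ≤ m) : dseq a m ∣ a j :=
  Finset.gcd_dvd (mem_Icc.2 ⟨h1, h2⟩)

lemma dseq_succ_dvd (a : ℕ → ℕ) (m : ℕ) : dseq a (m + 1) ∣ dseq a m :=
  dseq_succ a m ▸ Nat.gcd_dvd_left _ _

lemma dseq_pos {a : ℕ → ℕ} (ha : 0 < a 1) {m : ℕ} (hm : 1 ≤ m) : 0 < dseq a m :=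
  Nat.pos_of_dvd_of_pos (dseq_dvd le_rfl hm) ha

lemma dseq_div_dseq_succ_pos {a : ℕ → ℕ} (ha : 0 < a 1) {m : ℕ} (hm : 1 ≤ m) :
    0 < dseq a m / dseq a (m + 1) :=
  Nat.div_pos (Nat.le_of_dvd (dseq_pos ha hm) (dseq_succ_dvd a m)) (dseq_pos ha (by omega))

lemma dseq_dvd_sum (a x : ℕ → ℕ) (m : ℕ) : dseq a m ∣ ∑ i ∈ Icc 1 m, a i * x i :=
  dvd_sum fun _ hi => (dseq_dvd (mem_Icc.1 hi).1 (mem_Icc.1 hi).2).mul_right _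

lemma InB.mono {M m : ℕ} {a l : ℕ → ℕ} (h : InB M a l) (hm : m ≤ M) : InB m a l :=
  fun i h2 hi => h i h2 (hi.trans hm)

lemma InB.lt_dseq_div {m : ℕ} {a l : ℕ → ℕ} (h : InB (m + 1) a l) (ha : 0 < a 1) (hm : 1 ≤ m) :
    l (m + 1) < dseq a m / dseq a (m + 1) := by
  have hl := h (m + 1) (by omega) le_rfl
  rw [Nat.add_sub_cancel] at hl
  have := dseq_div_dseq_succ_pos ha hm
  omega

lemma InB.update_succ {m : ℕ} {a l : ℕ → ℕ} (h : InB m a l) {r : ℕ}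
    (hr : r < dseq a m / dseq a (m + 1)) : InB (m + 1) a (Function.update l (m + 1) r) := by
  intro i h2 hi
  obtain hi | rfl := hi.lt_or_eq
  · rw [Function.update_of_ne (by omega)]
    exact h i h2 (by omega)
  · rw [Function.update_self, Nat.add_sub_cancel]
    omega

lemma sum_Icc_update_succ (a l : ℕ → ℕ) (m r : ℕ) :
    ∑ i ∈ Icc 1 (m + 1), a i * Function.update l (m + 1) r i
      = ∑ i ∈ Icc 1 m, a i * l i + a (m + 1) * r := by
  rw [sum_Icc_succ_top (by omega), Function.update_self]
  congr 1
  refine sum_congr rfl fun i hi => ?_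
  rw [Function.update_of_ne (by simp only [mem_Icc] at hi; omega)]

lemma Telescopic.exists_mul_eq_sum {M m : ℕ} {a : ℕ → ℕ} (htel : Telescopic M a) (hm : 1 ≤ m)
    (hM : m + 1 ≤ M) :
    ∃ k : ℕ → ℕ, a (m + 1) * (dseq a m / dseq a (m + 1)) = ∑ j ∈ Icc 1 m, a j * k j := by
  obtain ⟨k, hk⟩ := htel (m + 1) (by omega) hM
  rw [Nat.add_sub_cancel] at hk
  refine ⟨k, ?_⟩
  have hg : dseq a (m + 1) ∣ a (m + 1) := dseq_succ a m ▸ Nat.gcd_dvd_right _ _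
  calc a (m + 1) * (dseq a m / dseq a (m + 1))
      = a (m + 1) / dseq a (m + 1) * dseq a m := by
        rw [← Nat.mul_div_assoc _ (dseq_succ_dvd a m), Nat.div_mul_right_comm hg]
    _ = ∑ j ∈ Icc 1 m, a j * k j := by
        rw [hk, sum_mul]
        refine sum_congr rfl fun j hj => ?_
        rw [mul_right_comm, Nat.div_mul_cancel (dseq_dvd (mem_Icc.1 hj).1 (mem_Icc.1 hj).2)]

lemma sum_Icc_succ_eq_of_mul_eq_sum {a k : ℕ → ℕ} {m c : ℕ}
    (hk : a (m + 1) * c = ∑ j ∈ Icc 1 m, a j * k j) (x : ℕ → ℕ) :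
    ∑ i ∈ Icc 1 (m + 1), a i * x i
      = ∑ i ∈ Icc 1 m, a i * (x i + k i * (x (m + 1) / c)) + a (m + 1) * (x (m + 1) % c) := by
  have hsum : ∑ i ∈ Icc 1 m, a i * (x i + k i * (x (m + 1) / c))
      = ∑ i ∈ Icc 1 m, a i * x i + a (m + 1) * c * (x (m + 1) / c) := by
    rw [hk, sum_mul, ← sum_add_distrib]
    exact sum_congr rfl fun _ _ => by ring
  rw [sum_Icc_succ_top (by omega), hsum]
  conv_lhs => rw [← Nat.div_add_mod (x (m + 1)) c]
  ring

lemma exists_inB_sum_eq {M : ℕ} {a : ℕ → ℕ} (ha : 0 < a 1) (htel : Telescopic M a) :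
    ∀ m, 1 ≤ m → m ≤ M → ∀ x : ℕ → ℕ,
      ∃ k, InB m a k ∧ ∑ i ∈ Icc 1 m, a i * x i = ∑ i ∈ Icc 1 m, a i * k i := by
  intro m hm
  induction m, hm using Nat.le_induction with
  | base => exact fun _ x => ⟨x, fun i h2 h1 => by omega, rfl⟩
  | succ m hm ih =>
    intro hM x
    obtain ⟨k₀, hk₀⟩ := htel.exists_mul_eq_sum hm hM
    set c := dseq a m / dseq a (m + 1)
    obtain ⟨k, hkB, hk⟩ := ih (by omega) fun i => x i + k₀ i * (x (m + 1) / c)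
    refine ⟨Function.update k (m + 1) (x (m + 1) % c),
      hkB.update_succ (Nat.mod_lt _ (dseq_div_dseq_succ_pos ha hm)), ?_⟩
    rw [sum_Icc_update_succ, ← hk, sum_Icc_succ_eq_of_mul_eq_sum hk₀]

lemma InB.eq_succ_of_sum_eq {m : ℕ} {a k k' : ℕ → ℕ} (ha : 0 < a 1) (hm : 1 ≤ m)
    (hk : InB (m + 1) a k) (hk' : InB (m + 1) a k')
    (h : ∑ i ∈ Icc 1 (m + 1), a i * k i = ∑ i ∈ Icc 1 (m + 1), a i * k' i) :
    k (m + 1) = k' (m + 1) := by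
  rw [sum_Icc_succ_top (by omega), sum_Icc_succ_top (by omega)] at h
  have hmod (l : ℕ → ℕ) :
      ∑ i ∈ Icc 1 m, a i * l i + a (m + 1) * l (m + 1) ≡ a (m + 1) * l (m + 1) [MOD dseq a m] := by
    simpa using (Nat.modEq_zero_iff_dvd.2 (dseq_dvd_sum a l m)).add_right (a (m + 1) * l (m + 1))
  have hc := ((hmod k).symm.trans (h ▸ hmod k')).cancel_left_div_gcd (dseq_pos ha hm)
  rw [← dseq_succ] at hc
  exact hc.eq_of_lt_of_lt (hk.lt_dseq_div ha hm) (hk'.lt_dseq_div ha hm)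

lemma InB.eq_of_sum_eq {a : ℕ → ℕ} (ha : 0 < a 1) :
    ∀ m, 1 ≤ m → ∀ {k k' : ℕ → ℕ}, InB m a k → InB m a k' →
      ∑ i ∈ Icc 1 m, a i * k i = ∑ i ∈ Icc 1 m, a i * k' i →
      ∀ i, 1 ≤ i → i ≤ m → k i = k' i := by
  intro m hm
  induction m, hm using Nat.le_induction with
  | base =>
    intro k k' _ _ h i h1 h2
    obtain rfl : i = 1 := by omega
    simp only [Icc_self, sum_singleton] at h
    exact Nat.eq_of_mul_eq_mul_left ha h
  | succ m hm ih =>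
    intro k k' hk hk' h i h1 h2
    have hlast := hk.eq_succ_of_sum_eq ha hm hk' h
    rcases Nat.le_succ_iff.1 h2 with h2 | rfl
    · rw [sum_Icc_succ_top (by omega), sum_Icc_succ_top (by omega), hlast] at h
      exact ih (hk.mono (by omega)) (hk'.mono (by omega)) (Nat.add_right_cancel h) i h1 h2
    · exact hlast

theorem telescopic_unique_representation_general
    (m : ℕ) (hm : 2 ≤ m) (a : ℕ → ℕ)
    (hpos : ∀ i, 1 ≤ i → i ≤ m → 0 < a i)
    (htel : Telescopic m a)
    (n : ℕ) (hn : ∃ x : ℕ → ℕ, n = ∑ i ∈ Finset.Icc 1 m, a i * x i) :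
    ∃ k : ℕ → ℕ, InB m a k ∧ n = ∑ i ∈ Finset.Icc 1 m, a i * k i ∧
      ∀ k' : ℕ → ℕ, InB m a k' → n = ∑ i ∈ Finset.Icc 1 m, a i * k' i →
        ∀ i, 1 ≤ i → i ≤ m → k' i = k i := by
  have ha : 0 < a 1 := hpos 1 le_rfl (by omega)
  obtain ⟨x, rfl⟩ := hn
  obtain ⟨k, hkB, hk⟩ := exists_inB_sum_eq ha htel m (by omega) le_rfl x
  exact ⟨k, hkB, hk, fun k' hk'B hk' =>
    InB.eq_of_sum_eq ha m (by omega) hk'B hkB (hk'.symm.trans hk)⟩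

/-- For a telescopic sequence, every element `n` of the numerical semigroup
`S = a_1 ℤ_{≥0} + ⋯ + a_m ℤ_{≥0}` has a unique representative `(k_1,…,k_m)`
in `B(A_m)` with `a_1 k_1 + ⋯ + a_m k_m = n` (uniqueness in the coordinates
`1, …, m`). -/
theorem telescopic_unique_representation
    (m : ℕ) (hm : 2 ≤ m) (a : ℕ → ℕ)
    (hpos : ∀ i, 1 ≤ i → i ≤ m → 0 < a i)
    (hgcd : (Finset.Icc 1 m).gcd a = 1)
    (htel : Telescopic m a)
    (n : ℕ) (hn : ∃ x : ℕ → ℕ, n = ∑ i ∈ Finset.Icc 1 m, a i * x i) :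
    ∃ k : ℕ → ℕ, InB m a k ∧ n = ∑ i ∈ Finset.Icc 1 m, a i * k i ∧
      ∀ k' : ℕ → ℕ, InB m a k' → n = ∑ i ∈ Finset.Icc 1 m, a i * k' i →
        ∀ i, 1 ≤ i → i ≤ m → k' i = k i :=
  telescopic_unique_representation_general m hm a hpos htel n hn
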